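/- arXiv:cs/0512030 — 4 statements merged into one kernel-verified Lean document; each statement's English description precedes it below -/
import Mathlib

section
/- If A and B are symmetric linear operators on a complex Hilbert space, then for every f in the domain of both AB and BA and all real numbers a, b: ‖(A−a)f‖·‖(B−b)f‖ ≥ (1/2)·√( |⟨(AB−BA)f, f⟩|² + |⟨((A−a)(B−b)+(B−b)(A−a))f, f⟩|² ). -/
/-!
Put `S = A - a` and `T = B - b`; both are symmetric and `[S, T] = [A, B]`. With `z = ⟪S f, T f⟫`,
symmetry gives `⟪[S, T] f, f⟫ = conj z - z` and `⟪(ST + TS) f, f⟫ = conj z + z`. By the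
parallelogram law in `𝕜` the squared norms of these two numbers add up to `4 ‖z‖ ^ 2`, and
Cauchy–Schwarz bounds `‖z‖` by `‖S f‖ ‖T f‖`.
-/

open ComplexConjugate

section

variable {𝕜 E : Type*} [RCLike 𝕜] [NormedAddCommGroup E] [InnerProductSpace 𝕜 E]

lemma RCLike.norm_conj_sub_sq_add_norm_conj_add_sq (z : 𝕜) :
    ‖conj z - z‖ ^ 2 + ‖conj z + z‖ ^ 2 = (2 * ‖z‖) ^ 2 := by
  have h := parallelogram_law_with_norm 𝕜 (conj z) z
  rw [RCLike.norm_conj] at h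
  nlinarith

namespace LinearMap.IsSymmetric

variable {S T : E →ₗ[𝕜] E}

lemma inner_commutator_apply_self (hS : S.IsSymmetric) (hT : T.IsSymmetric) (f : E) :
    inner 𝕜 (S (T f) - T (S f)) f = conj (inner 𝕜 (S f) (T f)) - inner 𝕜 (S f) (T f) := by
  rw [inner_sub_left, hS (T f), hT (S f), inner_conj_symm]

lemma inner_anticommutator_apply_self (hS : S.IsSymmetric) (hT : T.IsSymmetric) (f : E) :
    inner 𝕜 (S (T f) + T (S f)) f = conj (inner 𝕜 (S f) (T f)) + inner 𝕜 (S f) (T f) := by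
  rw [inner_add_left, hS (T f), hT (S f), inner_conj_symm]

theorem sqrt_norm_inner_commutator_sq_add_le (hS : S.IsSymmetric) (hT : T.IsSymmetric) (f : E) :
    1 / 2 * √(‖inner 𝕜 (S (T f) - T (S f)) f‖ ^ 2 + ‖inner 𝕜 (S (T f) + T (S f)) f‖ ^ 2) ≤
      ‖S f‖ * ‖T f‖ := by
  rw [hS.inner_commutator_apply_self hT, hS.inner_anticommutator_apply_self hT,
    RCLike.norm_conj_sub_sq_add_norm_conj_add_sq, Real.sqrt_sq (by positivity)]
  linarith [norm_inner_le_norm (𝕜 := 𝕜) (S f) (T f)]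

end LinearMap.IsSymmetric

end

theorem uncertainty_symmetric_operators_general
    {H : Type*} [NormedAddCommGroup H] [InnerProductSpace ℂ H]
    (A B : H →ₗ[ℂ] H)
    (hA : ∀ x y : H, (inner ℂ (A x) y : ℂ) = inner ℂ x (A y))
    (hB : ∀ x y : H, (inner ℂ (B x) y : ℂ) = inner ℂ x (B y))
    (f : H) (a b : ℝ) :
    ‖A f - (a : ℂ) • f‖ * ‖B f - (b : ℂ) • f‖ ≥
      (1 / 2) * Real.sqrt
        (‖(inner ℂ (A (B f) - B (A f)) f : ℂ)‖ ^ 2 +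
         ‖(inner ℂ ((A (B f - (b : ℂ) • f) - (a : ℂ) • (B f - (b : ℂ) • f)) +
             (B (A f - (a : ℂ) • f) - (b : ℂ) • (A f - (a : ℂ) • f))) f : ℂ)‖ ^ 2) := by
  set S := A - (a : ℂ) • LinearMap.id
  set T := B - (b : ℂ) • LinearMap.id
  have hS : S.IsSymmetric := LinearMap.IsSymmetric.sub hA (.smul (Complex.conj_ofReal a) .id)
  have hT : T.IsSymmetric := LinearMap.IsSymmetric.sub hB (.smul (Complex.conj_ofReal b) .id)
  have hcomm : A (B f) - B (A f) = S (T f) - T (S f) := by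
    simp only [S, T, LinearMap.sub_apply, LinearMap.smul_apply, LinearMap.id_apply, map_sub,
      map_smul]
    module
  rw [hcomm]
  exact hS.sqrt_norm_inner_commutator_sq_add_le hT f

/-- Selig's general uncertainty principle for two symmetric operators `A`, `B`:
`‖(A−a)f‖·‖(B−b)f‖ ≥ (1/2)·√(|⟨[A,B]f,f⟩|² + |⟨[A−a,B−b]₊f,f⟩|²)`. -/
theorem uncertainty_symmetric_operators
    {H : Type*} [NormedAddCommGroup H] [InnerProductSpace ℂ H] [CompleteSpace H]
    (A B : H →ₗ[ℂ] H)
    (hA : ∀ x y : H, (inner ℂ (A x) y : ℂ) = inner ℂ x (A y))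
    (hB : ∀ x y : H, (inner ℂ (B x) y : ℂ) = inner ℂ x (B y))
    (f : H) (a b : ℝ) :
    ‖A f - (a : ℂ) • f‖ * ‖B f - (b : ℂ) • f‖ ≥
      (1 / 2) * Real.sqrt
        (‖(inner ℂ (A (B f) - B (A f)) f : ℂ)‖ ^ 2 +
         ‖(inner ℂ ((A (B f - (b : ℂ) • f) - (a : ℂ) • (B f - (b : ℂ) • f)) +
             (B (A f - (a : ℂ) • f) - (b : ℂ) • (A f - (a : ℂ) • f))) f : ℂ)‖ ^ 2) :=
  uncertainty_symmetric_operators_general A B hA hB f a b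
end

section
/- Let 𝒟 and ℬ be closed subspaces of a complex Hilbert space with orthogonal projections D and B, and suppose the minimum angle θ₀ := inf{θ(f,g) : 0 ≠ f ∈ ℬ, 0 ≠ g ∈ 𝒟} is positive. Then for any f ≠ 0 with Df ≠ 0 and Bf ≠ 0, setting α = ‖Df‖/‖f‖ and β = ‖Bf‖/‖f‖, one has arccos α + arccos β ≥ θ₀. -/
/-!
The angle θ(f, g) is the unoriented angle of `f` and `g` for the real inner product
`Re ⟨·, ·⟩`. Since `Re ⟨Bf, f⟩ = ‖Bf‖²`, the angle between `Bf` and `f` is `arccos β`, and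
likewise that between `f` and `Df` is `arccos α`. The triangle inequality for angles then gives
`θ₀ ≤ θ(Bf, Df) ≤ arccos β + arccos α`.
-/

open InnerProductGeometry

attribute [local instance] InnerProductSpace.complexToReal

section

variable {H : Type*} [NormedAddCommGroup H] [InnerProductSpace ℂ H]

theorem angle_eq_arccos_re_inner (x y : H) :
    angle x y = Real.arccos ((inner ℂ x y).re / (‖x‖ * ‖y‖)) := by
  rw [angle, real_inner_eq_re_inner, RCLike.re_to_complex]

theorem angle_starProjection_self (K : Submodule ℂ H) [K.HasOrthogonalProjection] (v : H) :
    angle (K.starProjection v) v = Real.arccos (‖K.starProjection v‖ / ‖v‖) := by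
  have hre : (inner ℂ (K.starProjection v) v).re = ‖K.starProjection v‖ ^ 2 :=
    K.re_inner_starProjection_eq_normSq v
  rw [angle_eq_arccos_re_inner, hre]
  rcases eq_or_ne (K.starProjection v) 0 with h | h
  · simp [h]
  · rw [sq, mul_div_mul_left _ _ (norm_ne_zero_iff.2 h)]

end

theorem uncertainty_minimum_angle_general
    {H : Type*} [NormedAddCommGroup H] [InnerProductSpace ℂ H]
    (𝒟 ℬ : Submodule ℂ H) [CompleteSpace 𝒟] [CompleteSpace ℬ]
    (D B : H →L[ℂ] H)
    (hD : D = 𝒟.subtypeL.comp 𝒟.orthogonalProjectionOnto)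
    (hB : B = ℬ.subtypeL.comp ℬ.orthogonalProjectionOnto)
    (θ₀ : ℝ)
    (hθ₀ : θ₀ = sInf {θ : ℝ | ∃ f ∈ ℬ, ∃ g ∈ 𝒟, f ≠ 0 ∧ g ≠ 0 ∧
      θ = Real.arccos ((inner ℂ f g : ℂ).re / (‖f‖ * ‖g‖))})
    (f : H) (hDf : D f ≠ 0) (hBf : B f ≠ 0) :
    Real.arccos (‖D f‖ / ‖f‖) + Real.arccos (‖B f‖ / ‖f‖) ≥ θ₀ := by
  change D = 𝒟.starProjection at hD
  change B = ℬ.starProjection at hB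
  subst hD hB
  calc θ₀ ≤ angle (ℬ.starProjection f) (𝒟.starProjection f) := by
        rw [hθ₀, angle_eq_arccos_re_inner]
        refine csInf_le ⟨0, ?_⟩ ⟨_, ℬ.starProjection_apply_mem f, _,
          𝒟.starProjection_apply_mem f, hBf, hDf, rfl⟩
        rintro _ ⟨-, -, -, -, -, -, rfl⟩
        exact Real.arccos_nonneg _
    _ ≤ angle (ℬ.starProjection f) f + angle f (𝒟.starProjection f) :=
      angle_le_angle_add_angle _ _ _
    _ = _ := by rw [angle_comm f, angle_starProjection_self, angle_starProjection_self, add_comm]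

/-- Uncertainty principle for subspaces forming a positive minimum angle: with
`α = ‖Df‖/‖f‖`, `β = ‖Bf‖/‖f‖`, one has `arccos α + arccos β ≥ θ₀`. -/
theorem uncertainty_minimum_angle
    {H : Type*} [NormedAddCommGroup H] [InnerProductSpace ℂ H] [CompleteSpace H]
    (𝒟 ℬ : Submodule ℂ H) [CompleteSpace 𝒟] [CompleteSpace ℬ]
    (D B : H →L[ℂ] H)
    (hD : D = 𝒟.subtypeL.comp 𝒟.orthogonalProjectionOnto)
    (hB : B = ℬ.subtypeL.comp ℬ.orthogonalProjectionOnto)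
    (θ₀ : ℝ)
    (hθ₀ : θ₀ = sInf {θ : ℝ | ∃ f ∈ ℬ, ∃ g ∈ 𝒟, f ≠ 0 ∧ g ≠ 0 ∧
      θ = Real.arccos ((inner ℂ f g : ℂ).re / (‖f‖ * ‖g‖))})
    (hpos : 0 < θ₀)
    (f : H) (hf : f ≠ 0) (hDf : D f ≠ 0) (hBf : B f ≠ 0) :
    Real.arccos (‖D f‖ / ‖f‖) + Real.arccos (‖B f‖ / ‖f‖) ≥ θ₀ :=
  uncertainty_minimum_angle_general 𝒟 ℬ D B hD hB θ₀ hθ₀ f hDf hBf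
end

section
/- (Donoho–Stark-type generalized uncertainty) Let f ∈ L¹(ℝ³) ∩ L²(ℝ³) and f̂ ∈ L²(ℝ³) ∩ L^∞(ℝ³) with f ≠ 0 (in L²), and suppose (1) ‖f‖₂ = α‖f̂‖₂ and (2) ‖f̂‖_∞ ≤ β‖f‖₁ for constants α, β > 0. Suppose further that f is ε_T-concentrated on a measurable set V_T in L¹ norm (∫_{V_T}|f| ≥ (1−ε_T)‖f‖₁ with 0 ≤ ε_T < 1) and f̂ is ε_R-concentrated on a measurable set V_R in L² norm (∫_{V_R}|f̂|² ≥ (1−ε_R²)‖f̂‖₂² with 0 ≤ ε_R < 1). Then |V_T|·|V_R|·α²·β² ≥ (1−ε_T)²(1−ε_R²), where |V| denotes Lebesgue measure. -/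
open MeasureTheory

/-!
With `A = ‖f‖₂²`, `B = ‖f̂‖₂²` and `C = ‖f‖₁`, the two concentration hypotheses transfer mass
between the norms in opposite directions. Cauchy–Schwarz on `V_T` gives
`(1 - ε_T)² C² ≤ |V_T| A = |V_T| α² B`, and the sup bound on `f̂` over `V_R` gives
`(1 - ε_R²) B ≤ |V_R| β² C²`. Chaining the two and cancelling `B C² > 0` yields the claim.
-/

section SetIntegral

variable {α E : Type*} [MeasurableSpace α] [NormedAddCommGroup E] {μ : Measure α} {s : Set α}
  {g : α → E}

theorem sq_setIntegral_norm_le_measureReal_mul (hs : μ s < ⊤) (hg : MemLp g 2 (μ.restrict s)) :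
    (∫ x in s, ‖g x‖ ∂μ) ^ 2 ≤ μ.real s * ∫ x in s, ‖g x‖ ^ 2 ∂μ := by
  have : IsFiniteMeasure (μ.restrict s) := ⟨by simpa using hs⟩
  have holder := integral_mul_le_Lp_mul_Lq_of_nonneg Real.HolderConjugate.two_two
    (ae_of_all _ fun x => norm_nonneg (g x)) (ae_of_all _ fun _ => zero_le_one)
    (by simpa using hg.norm) (by simpa using memLp_const (1 : ℝ))
  simp only [mul_one, one_pow, Real.rpow_two, setIntegral_const, smul_eq_mul,
    ← Real.sqrt_eq_rpow] at holder
  calc (∫ x in s, ‖g x‖ ∂μ) ^ 2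
      ≤ (√(∫ x in s, ‖g x‖ ^ 2 ∂μ) * √(μ.real s)) ^ 2 :=
        pow_le_pow_left₀ (integral_nonneg fun x => norm_nonneg _) holder 2
    _ = μ.real s * ∫ x in s, ‖g x‖ ^ 2 ∂μ := by
        rw [mul_pow, Real.sq_sqrt (integral_nonneg fun x => by positivity),
          Real.sq_sqrt measureReal_nonneg, mul_comm]

theorem sq_mul_integral_norm_le_of_concentrated {ε : ℝ} (hε : ε < 1) (hs : μ s < ⊤)
    (hg1 : Integrable g μ) (hg2 : Integrable (fun x => ‖g x‖ ^ 2) μ)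
    (hconc : (1 - ε) * ∫ x, ‖g x‖ ∂μ ≤ ∫ x in s, ‖g x‖ ∂μ) :
    ((1 - ε) * ∫ x, ‖g x‖ ∂μ) ^ 2 ≤ μ.real s * ∫ x, ‖g x‖ ^ 2 ∂μ :=
  calc ((1 - ε) * ∫ x, ‖g x‖ ∂μ) ^ 2
      ≤ (∫ x in s, ‖g x‖ ∂μ) ^ 2 :=
        pow_le_pow_left₀ (mul_nonneg (by linarith) (integral_nonneg fun x => norm_nonneg _))
          hconc 2
    _ ≤ μ.real s * ∫ x in s, ‖g x‖ ^ 2 ∂μ :=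
        sq_setIntegral_norm_le_measureReal_mul hs
          ((memLp_two_iff_integrable_sq_norm hg1.aestronglyMeasurable.restrict).2 hg2.restrict)
    _ ≤ μ.real s * ∫ x, ‖g x‖ ^ 2 ∂μ :=
        mul_le_mul_of_nonneg_left (setIntegral_le_integral hg2 (ae_of_all _ fun x => by positivity))
          measureReal_nonneg

theorem setIntegral_norm_sq_le_of_ae_norm_le {M : ℝ} (hs : μ s < ⊤) (hg : ∀ᵐ x ∂μ, ‖g x‖ ≤ M) :
    ∫ x in s, ‖g x‖ ^ 2 ∂μ ≤ M ^ 2 * μ.real s :=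
  (Real.le_norm_self _).trans <| norm_setIntegral_le_of_norm_le_const_ae' hs <|
    hg.mono fun _ hx _ =>
      (abs_of_nonneg (sq_nonneg _)).trans_le (pow_le_pow_left₀ (norm_nonneg _) hx 2)

end SetIntegral

theorem mul_le_mul_of_cross_bounds {p q a b B X : ℝ} (hB : 0 < B) (hp : 0 ≤ p) (ha : 0 ≤ a)
    (hb : 0 ≤ b) (hpa : p * X ≤ a * B) (hqb : q * B ≤ b * X) : p * q ≤ a * b := by
  rcases le_or_gt q 0 with hq | hq
  · nlinarith [mul_nonneg ha hb]
  have hX : 0 < X := pos_of_mul_pos_right ((mul_pos hq hB).trans_le hqb) hb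
  have : p * q * X ≤ a * b * X :=
    calc p * q * X = q * (p * X) := by ring
      _ ≤ q * (a * B) := mul_le_mul_of_nonneg_left hpa hq.le
      _ = a * (q * B) := by ring
      _ ≤ a * (b * X) := mul_le_mul_of_nonneg_left hqb ha
      _ = a * b * X := by ring
  exact le_of_mul_le_mul_right this hX

theorem generalized_uncertainty_general
    (f fhat : EuclideanSpace ℝ (Fin 3) → ℂ)
    (hf1 : Integrable f) (hf2 : Integrable (fun x => ‖f x‖ ^ 2))
    (hfne : 0 < ∫ x, ‖f x‖ ^ 2)
    (α β : ℝ)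
    (h1 : Real.sqrt (∫ x, ‖f x‖ ^ 2) = α * Real.sqrt (∫ x, ‖fhat x‖ ^ 2))
    (h2 : ∀ᵐ x, ‖fhat x‖ ≤ β * ∫ y, ‖f y‖)
    (VT VR : Set (EuclideanSpace ℝ (Fin 3)))
    (hVTfin : volume VT < ⊤) (hVRfin : volume VR < ⊤)
    (εT εR : ℝ) (hεT1 : εT < 1)
    (hconcT : (∫ x in VT, ‖f x‖) ≥ (1 - εT) * ∫ x, ‖f x‖)
    (hconcR : (∫ x in VR, ‖fhat x‖ ^ 2) ≥ (1 - εR ^ 2) * ∫ x, ‖fhat x‖ ^ 2) :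
    (volume VT).toReal * (volume VR).toReal * α ^ 2 * β ^ 2 ≥
      (1 - εT) ^ 2 * (1 - εR ^ 2) := by
  set A := ∫ x, ‖f x‖ ^ 2
  set B := ∫ x, ‖fhat x‖ ^ 2
  set C := ∫ x, ‖f x‖
  have hAB : A = α ^ 2 * B := by
    have := congrArg (· ^ 2) h1
    rwa [mul_pow, Real.sq_sqrt hfne.le,
      Real.sq_sqrt (integral_nonneg fun x => sq_nonneg ‖fhat x‖)] at this
  have hB : 0 < B := pos_of_mul_pos_right (hAB ▸ hfne) (sq_nonneg α)
  have hT : (1 - εT) ^ 2 * C ^ 2 ≤ (volume VT).toReal * α ^ 2 * B := by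
    rw [mul_assoc, ← hAB, ← mul_pow]
    exact sq_mul_integral_norm_le_of_concentrated hεT1 hVTfin hf1 hf2 hconcT
  have hR : (1 - εR ^ 2) * B ≤ (volume VR).toReal * β ^ 2 * C ^ 2 := by
    have := hconcR.le.trans (setIntegral_norm_sq_le_of_ae_norm_le hVRfin h2)
    rw [measureReal_def] at this
    linear_combination this
  have := mul_le_mul_of_cross_bounds hB (sq_nonneg _)
    (mul_nonneg ENNReal.toReal_nonneg (sq_nonneg α))
    (mul_nonneg ENNReal.toReal_nonneg (sq_nonneg β)) hT hR
  linear_combination this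

/-- Donoho–Stark-type generalized uncertainty principle on ℝ³:
`|V_T|·|V_R|·α²·β² ≥ (1−ε_T)²·(1−ε_R²)`. -/
theorem generalized_uncertainty
    (f fhat : EuclideanSpace ℝ (Fin 3) → ℂ)
    (hf1 : Integrable f) (hf2 : Integrable (fun x => ‖f x‖ ^ 2))
    (hfhat2 : Integrable (fun x => ‖fhat x‖ ^ 2))
    (hfne : 0 < ∫ x, ‖f x‖ ^ 2)
    (α β : ℝ) (hα : 0 < α) (hβ : 0 < β)
    (h1 : Real.sqrt (∫ x, ‖f x‖ ^ 2) = α * Real.sqrt (∫ x, ‖fhat x‖ ^ 2))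
    (h2 : ∀ᵐ x, ‖fhat x‖ ≤ β * ∫ y, ‖f y‖)
    (VT VR : Set (EuclideanSpace ℝ (Fin 3)))
    (hVT : MeasurableSet VT) (hVR : MeasurableSet VR)
    (hVTfin : volume VT < ⊤) (hVRfin : volume VR < ⊤)
    (εT εR : ℝ) (hεT : 0 ≤ εT) (hεT1 : εT < 1) (hεR : 0 ≤ εR) (hεR1 : εR < 1)
    (hconcT : (∫ x in VT, ‖f x‖) ≥ (1 - εT) * ∫ x, ‖f x‖)
    (hconcR : (∫ x in VR, ‖fhat x‖ ^ 2) ≥ (1 - εR ^ 2) * ∫ x, ‖fhat x‖ ^ 2) :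
    (volume VT).toReal * (volume VR).toReal * α ^ 2 * β ^ 2 ≥
      (1 - εT) ^ 2 * (1 - εR ^ 2) :=
  generalized_uncertainty_general f fhat hf1 hf2 hfne α β h1 h2 VT VR hVTfin hVRfin εT εR hεT1
    hconcT hconcR
end

section
/- Under the hypotheses of the generalized uncertainty theorem with ε_T = 0 (f perfectly concentrated on V_T, i.e., f vanishes a.e. outside V_T), one obtains |V_T|·|V_R|·α²·β² ≥ 1 − ε_R². -/
/-!
Cauchy–Schwarz on the support `V_T` gives `‖f‖₁² ≤ |V_T| ‖f‖₂² = |V_T| α² ‖f̂‖₂²`, while the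
sup bound on `f̂` gives `∫_{V_R} |f̂|² ≤ |V_R| β² ‖f‖₁²`. Chaining these with the concentration
hypothesis yields `(1 - ε_R²) ‖f̂‖₂² ≤ |V_T| |V_R| α² β² ‖f̂‖₂²`, and `‖f̂‖₂ > 0` because `f ≠ 0`.
-/

open MeasureTheory

namespace MeasureTheory

variable {α E : Type*} [MeasurableSpace α] [NormedAddCommGroup E] {μ : Measure α} {s : Set α}
  {f : α → E}

theorem sq_setIntegral_norm_le_measureReal_mul (hs : μ s < ⊤)
    (hf : AEStronglyMeasurable f (μ.restrict s))
    (hf2 : IntegrableOn (fun x => ‖f x‖ ^ 2) s μ) :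
    (∫ x in s, ‖f x‖ ∂μ) ^ 2 ≤ μ.real s * ∫ x in s, ‖f x‖ ^ 2 ∂μ := by
  have : IsFiniteMeasure (μ.restrict s) := ⟨by rwa [Measure.restrict_apply_univ]⟩
  have hconj : (2 : ℝ).HolderConjugate 2 := .two_two
  have hfL2 : MemLp f (ENNReal.ofReal 2) (μ.restrict s) := by
    rw [ENNReal.ofReal_ofNat]
    exact (memLp_two_iff_integrable_sq_norm hf).mpr hf2
  have hoL2 : MemLp (fun _ => (1 : ℝ)) (ENNReal.ofReal 2) (μ.restrict s) := memLp_const 1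
  have holder := integral_mul_norm_le_Lp_mul_Lq hconj hfL2.norm hoL2
  simp only [norm_norm, norm_one, mul_one, one_pow, integral_const, smul_eq_mul,
    measureReal_restrict_apply_univ, Real.rpow_ofNat, ← Real.sqrt_eq_rpow] at holder
  have hint_nonneg : 0 ≤ ∫ x in s, ‖f x‖ ^ 2 ∂μ := integral_nonneg fun x => by positivity
  calc (∫ x in s, ‖f x‖ ∂μ) ^ 2
      ≤ (√(∫ x in s, ‖f x‖ ^ 2 ∂μ) * √(μ.real s)) ^ 2 :=
        pow_le_pow_left₀ (integral_nonneg fun x => norm_nonneg _) holder 2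
    _ = μ.real s * ∫ x in s, ‖f x‖ ^ 2 ∂μ := by
        simp only [mul_pow, Real.sq_sqrt hint_nonneg,
          Real.sq_sqrt measureReal_nonneg]
        ring

theorem sq_integral_norm_le_measureReal_mul_of_ae_eq_zero (hs : μ s < ⊤)
    (hsupp : ∀ᵐ x ∂μ, x ∉ s → f x = 0) (hf : AEStronglyMeasurable f μ)
    (hf2 : Integrable (fun x => ‖f x‖ ^ 2) μ) :
    (∫ x, ‖f x‖ ∂μ) ^ 2 ≤ μ.real s * ∫ x, ‖f x‖ ^ 2 ∂μ := by
  have hsupp_pow (n : ℕ) (hn : n ≠ 0) : ∀ᵐ x ∂μ, x ∉ s → ‖f x‖ ^ n = 0 := by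
    filter_upwards [hsupp] with x hx hxs
    simp [hx hxs, hn]
  rw [← setIntegral_eq_integral_of_ae_compl_eq_zero (by simpa using hsupp_pow 1 one_ne_zero),
    ← setIntegral_eq_integral_of_ae_compl_eq_zero (hsupp_pow 2 two_ne_zero)]
  exact sq_setIntegral_norm_le_measureReal_mul hs hf.restrict hf2.integrableOn

theorem setIntegral_norm_sq_le_of_norm_le_const {C : ℝ} (hs : μ s < ⊤)
    (hC : ∀ᵐ x ∂μ, ‖f x‖ ≤ C) :
    ∫ x in s, ‖f x‖ ^ 2 ∂μ ≤ μ.real s * C ^ 2 := by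
  have hC2 : ∀ᵐ x ∂μ.restrict s, ‖‖f x‖ ^ 2‖ ≤ C ^ 2 := by
    filter_upwards [ae_restrict_of_ae hC] with x hx
    rw [norm_pow, norm_norm]
    exact pow_le_pow_left₀ (norm_nonneg _) hx 2
  calc ∫ x in s, ‖f x‖ ^ 2 ∂μ ≤ ‖∫ x in s, ‖f x‖ ^ 2 ∂μ‖ := Real.le_norm_self _
    _ ≤ C ^ 2 * μ.real s := norm_setIntegral_le_of_norm_le_const_ae hs hC2
    _ = μ.real s * C ^ 2 := mul_comm _ _

end MeasureTheory

theorem volumetric_communication_uncertainty_general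
    (f fhat : EuclideanSpace ℝ (Fin 3) → ℂ)
    (hf1 : Integrable f) (hf2 : Integrable (fun x => ‖f x‖ ^ 2))
    (hfne : 0 < ∫ x, ‖f x‖ ^ 2)
    (α β : ℝ)
    (h1 : Real.sqrt (∫ x, ‖f x‖ ^ 2) = α * Real.sqrt (∫ x, ‖fhat x‖ ^ 2))
    (h2 : ∀ᵐ x, ‖fhat x‖ ≤ β * ∫ y, ‖f y‖)
    (VT VR : Set (EuclideanSpace ℝ (Fin 3)))
    (hVTfin : volume VT < ⊤) (hVRfin : volume VR < ⊤)
    (hsupp : ∀ᵐ x, x ∉ VT → f x = 0)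
    (εR : ℝ)
    (hconcR : (∫ x in VR, ‖fhat x‖ ^ 2) ≥ (1 - εR ^ 2) * ∫ x, ‖fhat x‖ ^ 2) :
    (volume VT).toReal * (volume VR).toReal * α ^ 2 * β ^ 2 ≥ 1 - εR ^ 2 := by
  set I := ∫ x, ‖fhat x‖ ^ 2
  set L := ∫ y, ‖f y‖
  have hI_nonneg : 0 ≤ I := integral_nonneg fun x => by positivity
  have hI_pos : 0 < I := by
    refine hI_nonneg.lt_of_ne' fun hI => ?_
    rw [hI, Real.sqrt_zero, mul_zero] at h1
    exact (Real.sqrt_pos.mpr hfne).ne' h1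
  have hplancherel : ∫ x, ‖f x‖ ^ 2 = α ^ 2 * I := by
    have := congrArg (· ^ 2) h1
    simpa only [mul_pow, Real.sq_sqrt hfne.le, Real.sq_sqrt hI_nonneg] using this
  have hL : L ^ 2 ≤ (volume VT).toReal * (α ^ 2 * I) := hplancherel ▸
    sq_integral_norm_le_measureReal_mul_of_ae_eq_zero hVTfin hsupp hf1.1 hf2
  have hR : ∫ x in VR, ‖fhat x‖ ^ 2 ≤ (volume VR).toReal * (β * L) ^ 2 :=
    setIntegral_norm_sq_le_of_norm_le_const hVRfin h2
  have hchain :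
      (1 - εR ^ 2) * I ≤ ((volume VT).toReal * (volume VR).toReal * α ^ 2 * β ^ 2) * I :=
    calc (1 - εR ^ 2) * I ≤ (volume VR).toReal * β ^ 2 * L ^ 2 :=
          hconcR.trans (hR.trans_eq (by ring))
      _ ≤ (volume VR).toReal * β ^ 2 * ((volume VT).toReal * (α ^ 2 * I)) := by gcongr
      _ = _ := by ring
  exact le_of_mul_le_mul_right hchain hI_pos

/-- Volumetric communication uncertainty: with `ε_T = 0` (f supported a.e. in `V_T`),
`|V_T|·|V_R|·α²·β² ≥ 1 − ε_R²`. -/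
theorem volumetric_communication_uncertainty
    (f fhat : EuclideanSpace ℝ (Fin 3) → ℂ)
    (hf1 : Integrable f) (hf2 : Integrable (fun x => ‖f x‖ ^ 2))
    (hfhat2 : Integrable (fun x => ‖fhat x‖ ^ 2))
    (hfne : 0 < ∫ x, ‖f x‖ ^ 2)
    (α β : ℝ) (hα : 0 < α) (hβ : 0 < β)
    (h1 : Real.sqrt (∫ x, ‖f x‖ ^ 2) = α * Real.sqrt (∫ x, ‖fhat x‖ ^ 2))
    (h2 : ∀ᵐ x, ‖fhat x‖ ≤ β * ∫ y, ‖f y‖)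
    (VT VR : Set (EuclideanSpace ℝ (Fin 3)))
    (hVT : MeasurableSet VT) (hVR : MeasurableSet VR)
    (hVTfin : volume VT < ⊤) (hVRfin : volume VR < ⊤)
    (hsupp : ∀ᵐ x, x ∉ VT → f x = 0)
    (εR : ℝ) (hεR : 0 ≤ εR) (hεR1 : εR < 1)
    (hconcR : (∫ x in VR, ‖fhat x‖ ^ 2) ≥ (1 - εR ^ 2) * ∫ x, ‖fhat x‖ ^ 2) :
    (volume VT).toReal * (volume VR).toReal * α ^ 2 * β ^ 2 ≥ 1 - εR ^ 2 :=
  volumetric_communication_uncertainty_general f fhat hf1 hf2 hfne α β h1 h2 VT VR hVTfin hVRfin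
    hsupp εR hconcR
end
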